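/- Let u ∈ L³(D;ℝ³) be weakly divergence-free, extended by zero to ℝ³. Then for every test function χ ∈ C_c^∞(B(0,κ)) and all i,j ∈ {1,2,3}: ∑_{k=1}^{3} ∫_{ℝ³} ∂_{h_k}χ(h) ∫_D ψ(x) u^i(x) u^j(x) u^k(x+h) dx dh = 0; i.e., the vector field h ↦ ( ∫_D ψ (u^i u^j) T_h u^k dx )_{k=1,2,3} is divergence-free in the sense of distributions on B(0,κ). -/

import Mathlib

open MeasureTheory Metric Real Topology Filter ENNReal

noncomputable section

abbrev V3 : Type := EuclideanSpace ℝ (Fin 3)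

/-- The `i`-th partial derivative of a scalar function on `ℝ³`. -/
def pd (i : Fin 3) (f : V3 → ℝ) (x : V3) : ℝ := fderiv ℝ f x (EuclideanSpace.single i 1)

/-- A smooth compactly supported test function with support contained in `S`. -/
def IsTestOn (S : Set V3) (φ : V3 → ℝ) : Prop :=
  ContDiff ℝ (⊤ : ℕ∞) φ ∧ HasCompactSupport φ ∧ tsupport φ ⊆ S

/-- `u` is weakly divergence-free on `D`: `∫ u · ∇φ = 0` for all `φ ∈ C_c^∞(D)`. -/
def WeaklyDivFreeOn (D : Set V3) (u : V3 → V3) : Prop :=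
  ∀ φ : V3 → ℝ, IsTestOn D φ → ∫ x : V3, (inner ℝ (u x) (gradient φ x) : ℝ) = 0

/- ### Auxiliary lemmas -/

lemma aux_amgm3 (A B C : ℝ) (hA : 0 ≤ A) (hB : 0 ≤ B) (hC : 0 ≤ C) :
    A * B * C ≤ A^3 + B^3 + C^3 := by
  nlinarith [mul_nonneg (add_nonneg hA hB) (sq_nonneg (A-B)),
    mul_nonneg (add_nonneg hB hC) (sq_nonneg (B-C)),
    mul_nonneg (add_nonneg hA hC) (sq_nonneg (A-C)),
    mul_nonneg hA (sq_nonneg (B-C)), mul_nonneg hB (sq_nonneg (A-C)),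
    mul_nonneg hC (sq_nonneg (A-B)), pow_nonneg hA 3, pow_nonneg hB 3, pow_nonneg hC 3]

lemma aux_abs_le_one_add_cube (t : ℝ) : |t| ≤ 1 + |t|^3 := by
  nlinarith [abs_nonneg t, mul_nonneg (abs_nonneg t) (sq_nonneg (|t| - 1)),
    sq_nonneg (2*|t| - 1)]

lemma aux_coord_abs_le (v : V3) (k : Fin 3) : |v k| ≤ ‖v‖ := by
  have h1 : (inner ℝ (EuclideanSpace.single k (1:ℝ)) v : ℝ) = v k := by
    simp [EuclideanSpace.inner_single_left]
  have h2 := abs_real_inner_le_norm (EuclideanSpace.single k (1:ℝ)) v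
  rw [h1, EuclideanSpace.norm_single] at h2
  simpa using h2

lemma aux_ball_subset (D : Set V3) (ψ : V3 → ℝ) (hψD : tsupport ψ ⊆ D)
    (κ : ℝ) (hκ : κ = sInf (Set.image2 dist (tsupport ψ) (frontier D))) (hκpos : 0 < κ)
    (x : V3) (hx : x ∈ tsupport ψ) : Metric.ball x κ ⊆ D := by
  have hxD : x ∈ D := hψD hx
  have hDne : D ≠ Set.univ := by
    intro h
    rw [h] at hκ
    simp [frontier_univ] at hκ
    linarith
  obtain ⟨y, hyF, hyd⟩ := exists_mem_frontier_infDist_compl_eq_dist hxD hDne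
  have hκle : κ ≤ dist x y := by
    rw [hκ]
    exact csInf_le ⟨0, by rintro r ⟨a, _, b, _, rfl⟩; exact dist_nonneg⟩
      (Set.mem_image2_of_mem hx hyF)
  intro z hz
  by_contra hzD
  have h1 : Metric.infDist x Dᶜ ≤ dist x z := Metric.infDist_le_dist_of_mem hzD
  rw [hyd] at h1
  have h2 := mem_ball'.mp hz
  linarith

lemma aux_inner_vanish (D : Set V3) (u : V3 → V3) (hdiv : WeaklyDivFreeOn D u)
    (χ : V3 → ℝ) (hχ : ContDiff ℝ (⊤ : ℕ∞) χ) (hχc : HasCompactSupport χ)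
    (κ : ℝ) (hχκ : tsupport χ ⊆ Metric.ball (0 : V3) κ)
    (x : V3) (hball : Metric.ball x κ ⊆ D) :
    ∫ h : V3, ∑ k : Fin 3, pd k χ h * u (x + h) k = 0 := by
  set φ : V3 → ℝ := fun y => χ (y - x) with hφ
  have hφs : ContDiff ℝ (⊤ : ℕ∞) φ := hχ.comp (contDiff_id.sub contDiff_const)
  have hφc : HasCompactSupport φ := hχc.comp_homeomorph (Homeomorph.subRight x)
  have hφD : tsupport φ ⊆ D := by
    have h1 : tsupport φ ⊆ (fun y => y - x) ⁻¹' (tsupport χ) :=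
      closure_minimal (fun y hy => subset_closure hy)
        ((isClosed_tsupport χ).preimage (continuous_id.sub continuous_const))
    refine h1.trans ?_
    intro y hy
    apply hball
    have := hχκ hy
    rw [Metric.mem_ball] at this ⊢
    simpa [dist_eq_norm] using this
  have h0 := hdiv φ ⟨hφs, hφc, hφD⟩
  have hfd : ∀ y, fderiv ℝ φ y = fderiv ℝ χ (y - x) := by
    intro y
    have : HasFDerivAt φ (fderiv ℝ χ (y - x)) y := by
      have h1 : HasFDerivAt χ (fderiv ℝ χ (y - x)) (y - x) :=
        ((hχ.differentiable (by simp)) (y - x)).hasFDerivAt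
      have h2 := h1.comp y ((hasFDerivAt_id y).sub_const x)
      simp at h2
      exact h2
    exact this.fderiv
  have hinner : ∀ y, (inner ℝ (u y) (gradient φ y) : ℝ)
      = ∑ k : Fin 3, u y k * pd k χ (y - x) := by
    intro y
    have h1 : (inner ℝ (u y) (gradient φ y) : ℝ) = fderiv ℝ φ y (u y) := by
      rw [real_inner_comm]
      unfold gradient
      rw [← InnerProductSpace.toDual_apply_apply, LinearIsometryEquiv.apply_symm_apply]
    rw [h1, hfd y]
    conv_lhs => rw [show u y = ∑ k : Fin 3, u y k • EuclideanSpace.single k (1:ℝ) by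
      ext j
      rw [show (∑ k : Fin 3, u y k • EuclideanSpace.single k (1:ℝ)) j
          = ∑ k : Fin 3, (u y k • EuclideanSpace.single k (1:ℝ)) j from rfl]
      simp [EuclideanSpace.single_apply]]
    rw [map_sum]
    simp [pd]
  have key : ∫ h : V3, ∑ k : Fin 3, pd k χ h * u (x + h) k
      = ∫ y : V3, ∑ k : Fin 3, u y k * pd k χ (y - x) := by
    rw [← integral_add_left_eq_self (μ := volume)
      (fun y => ∑ k : Fin 3, u y k * pd k χ (y - x)) x]
    congr 1
    funext h
    simp [add_sub_cancel_left, mul_comm]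
  rw [key, ← h0]
  exact integral_congr_ae (Filter.Eventually.of_forall fun y => (hinner y).symm)

lemma aux_shift_aesm (u : V3 → V3) (hu : AEStronglyMeasurable u (volume : Measure V3)) :
    AEStronglyMeasurable (fun p : V3 × V3 => u (p.2 + p.1))
      ((volume : Measure V3).prod volume) := by
  have hq : Measure.QuasiMeasurePreserving (fun p : V3 × V3 => p.2 + p.1)
      ((volume : Measure V3).prod volume) volume := by
    have h1 := (measurePreserving_prod_add (volume : Measure V3) volume).quasiMeasurePreserving
    have h2 : Measure.QuasiMeasurePreserving (Prod.snd : V3 × V3 → V3)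
        ((volume : Measure V3).prod volume) volume := Measure.quasiMeasurePreserving_snd
    have h3 := h2.comp h1
    have : (fun p : V3 × V3 => p.2 + p.1)
        = (Prod.snd : V3 × V3 → V3) ∘ (fun z : V3 × V3 => (z.1, z.1 + z.2)) := by
      funext p; simp [add_comm]
    rwa [this]
  exact hu.comp_quasiMeasurePreserving hq

/-- The vector field `h ↦ (∫_D ψ u^i u^j T_h u^k dx)_k` is divergence-free in the sense of
distributions on `B(0,κ)`. -/
theorem divergence_free_flux
    (D : Set V3) (hD : IsOpen D) (hDbdd : Bornology.IsBounded D)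
    (ψ : V3 → ℝ) (hψ : ContDiff ℝ (⊤ : ℕ∞) ψ) (hψc : HasCompactSupport ψ) (hψD : tsupport ψ ⊆ D)
    (κ : ℝ) (hκ : κ = sInf (Set.image2 dist (tsupport ψ) (frontier D))) (hκpos : 0 < κ)
    (u : V3 → V3) (hu : MemLp u 3 volume) (huD : ∀ x, x ∉ D → u x = 0)
    (hdiv : WeaklyDivFreeOn D u)
    (χ : V3 → ℝ) (hχ : ContDiff ℝ (⊤ : ℕ∞) χ) (hχc : HasCompactSupport χ)
    (hχκ : tsupport χ ⊆ Metric.ball (0 : V3) κ)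
    (i j : Fin 3) :
    ∑ k : Fin 3, ∫ h : V3, pd k χ h *
        ∫ x in D, ψ x * (u x i * u x j * u (x + h) k) = 0 := by
  classical
  -- notation
  set K : Set V3 := tsupport ψ with hK
  set K' : Set V3 := tsupport χ with hK'
  have hKm : MeasurableSet K := (isClosed_tsupport ψ).measurableSet
  have hK'm : MeasurableSet K' := (isClosed_tsupport χ).measurableSet
  -- bound for ψ
  obtain ⟨Cψ, hCψ⟩ := hψ.continuous.bounded_above_of_compact_support hψc
  have hCψ0 : 0 ≤ Cψ := le_trans (norm_nonneg (ψ 0)) (hCψ 0)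
  -- partial derivatives of χ : continuity, support, bound
  have hpdc : ∀ k : Fin 3, Continuous (pd k χ) := by
    intro k
    exact (ContinuousLinearMap.apply ℝ ℝ (EuclideanSpace.single k (1:ℝ))).continuous.comp
      (hχ.continuous_fderiv (by simp))
  have hpd0 : ∀ k : Fin 3, ∀ h ∉ K', pd k χ h = 0 := by
    intro k h hh
    have : fderiv ℝ χ h = 0 := by
      by_contra hne
      exact hh (support_fderiv_subset ℝ (by simpa [Function.mem_support] using hne))
    simp [pd, this]
  have hBk : ∀ k : Fin 3, ∃ B : ℝ, 0 ≤ B ∧ ∀ h, ‖pd k χ h‖ ≤ B := by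
    intro k
    have hsupp : HasCompactSupport (pd k χ) := by
      apply hχc.mono'
      intro h hh
      by_contra hns
      exact hh (hpd0 k h hns)
    obtain ⟨B, hB⟩ := (hpdc k).bounded_above_of_compact_support hsupp
    exact ⟨B, le_trans (norm_nonneg _) (hB 0), hB⟩
  choose B hB0 hB using hBk
  -- the cube weight
  set w : V3 → ℝ := fun x => ‖u x‖ ^ (3:ℕ) with hw_def
  have hw0 : ∀ x, 0 ≤ w x := fun x => pow_nonneg (norm_nonneg _) 3
  have hw : Integrable w volume := by
    have h1 := hu.norm_rpow (by norm_num) (by norm_num)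
    rw [memLp_one_iff_integrable] at h1
    have he : (fun x => ‖u x‖ ^ (3:ℝ≥0∞).toReal) = w := by
      funext x
      rw [hw_def, show ((3:ℝ≥0∞).toReal) = ((3:ℕ):ℝ) by norm_num, Real.rpow_natCast]
    rwa [he] at h1
  -- measurability pieces
  have hum : AEStronglyMeasurable u (volume : Measure V3) := hu.1
  have huk : ∀ k : Fin 3, AEStronglyMeasurable (fun x => u x k) (volume : Measure V3) := by
    intro k
    exact (EuclideanSpace.proj k).continuous.comp_aestronglyMeasurable hum
  have hut : ∀ h : V3, AEStronglyMeasurable (fun x => u (x + h)) (volume : Measure V3) := by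
    intro h
    exact hum.comp_quasiMeasurePreserving
      (measurePreserving_add_right (volume : Measure V3) h).quasiMeasurePreserving
  have hutk : ∀ (h : V3) (k : Fin 3),
      AEStronglyMeasurable (fun x => u (x + h) k) (volume : Measure V3) := by
    intro h k
    exact (EuclideanSpace.proj k).continuous.comp_aestronglyMeasurable (hut h)
  -- the coefficient function
  set a : V3 → ℝ := fun x => ψ x * (u x i * u x j) with ha_def
  have ha_m : AEStronglyMeasurable a (volume : Measure V3) :=
    (hψ.continuous.aestronglyMeasurable).mul ((huk i).mul (huk j))
  have ha0 : ∀ x ∉ K, a x = 0 := by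
    intro x hx
    have : ψ x = 0 := image_eq_zero_of_notMem_tsupport hx
    simp [ha_def, this]
  -- key pointwise bound
  have hbound : ∀ (h x : V3) (k : Fin 3),
      ‖a x * u (x + h) k‖ ≤ K.indicator (fun x => Cψ * (2 * w x + w (x + h))) x := by
    intro h x k
    by_cases hx : x ∈ K
    · rw [Set.indicator_of_mem hx]
      have h1 : ‖a x * u (x + h) k‖ ≤ Cψ * (‖u x‖ * ‖u x‖ * ‖u (x + h)‖) := by
        have e1 : ‖a x * u (x + h) k‖ = ‖ψ x‖ * (|u x i| * |u x j| * |u (x + h) k|) := by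
          simp [ha_def, abs_mul, Real.norm_eq_abs]
          ring
        rw [e1]
        have h2 : |u x i| * |u x j| * |u (x + h) k| ≤ ‖u x‖ * ‖u x‖ * ‖u (x + h)‖ := by
          have := aux_coord_abs_le (u x) i
          have := aux_coord_abs_le (u x) j
          have := aux_coord_abs_le (u (x + h)) k
          gcongr <;> positivity
        exact mul_le_mul (hCψ x) h2 (by positivity) hCψ0
      refine h1.trans ?_
      have h3 : ‖u x‖ * ‖u x‖ * ‖u (x + h)‖ ≤ 2 * w x + w (x + h) := by
        have := aux_amgm3 ‖u x‖ ‖u x‖ ‖u (x + h)‖ (norm_nonneg _) (norm_nonneg _) (norm_nonneg _)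
        rw [hw_def]
        dsimp only
        linarith
      exact mul_le_mul_of_nonneg_left h3 hCψ0
    · rw [Set.indicator_of_notMem hx, ha0 x hx]
      simp
  -- the integrand functions
  set f : Fin 3 → V3 → V3 → ℝ := fun k h x => pd k χ h * (a x * u (x + h) k) with hf_def
  -- slice integrability in x, for every h
  have hslice : ∀ (k : Fin 3) (h : V3), Integrable (fun x => a x * u (x + h) k) volume := by
    intro k h
    refine Integrable.mono'
      (g := K.indicator fun x => Cψ * (2 * w x + w (x + h))) ?_ ?_ ?_
    · exact (((hw.const_mul 2).add (hw.comp_add_right h)).const_mul Cψ).indicator hKm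
    · exact ha_m.mul (hutk h k)
    · exact Filter.Eventually.of_forall fun x => hbound h x k
  have hslicef : ∀ (k : Fin 3) (h : V3), Integrable (f k h) volume := by
    intro k h
    exact (hslice k h).const_mul (pd k χ h)
  -- integral of the weight bound
  set M : ℝ := 3 * (Cψ * ∫ x, w x) with hM_def
  have hwint_nonneg : 0 ≤ ∫ x, w x := integral_nonneg hw0
  have hwb : ∀ h : V3, ∫ x, K.indicator (fun x => Cψ * (2 * w x + w (x + h))) x ≤ M := by
    intro h
    have hgint : Integrable (fun x => Cψ * (2 * w x + w (x + h))) volume :=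
      ((hw.const_mul 2).add (hw.comp_add_right h)).const_mul Cψ
    calc ∫ x, K.indicator (fun x => Cψ * (2 * w x + w (x + h))) x
        = ∫ x in K, Cψ * (2 * w x + w (x + h)) := integral_indicator hKm
      _ ≤ ∫ x, Cψ * (2 * w x + w (x + h)) := by
          apply setIntegral_le_integral hgint
          exact Filter.Eventually.of_forall fun x => by positivity
      _ = Cψ * (2 * (∫ x, w x) + ∫ x, w (x + h)) := by
          rw [integral_const_mul, integral_add ((hw.const_mul 2)) (hw.comp_add_right h),
            integral_const_mul]
      _ = M := by rw [integral_add_right_eq_self w h, hM_def]; ring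
  -- product integrability
  have hFm : ∀ k : Fin 3, AEStronglyMeasurable (Function.uncurry (f k))
      ((volume : Measure V3).prod volume) := by
    intro k
    have h1 : AEStronglyMeasurable (fun p : V3 × V3 => pd k χ p.1)
        ((volume : Measure V3).prod volume) :=
      ((hpdc k).comp continuous_fst).aestronglyMeasurable
    have h2 : AEStronglyMeasurable (fun p : V3 × V3 => a p.2)
        ((volume : Measure V3).prod volume) := ha_m.comp_snd
    have h3 : AEStronglyMeasurable (fun p : V3 × V3 => u (p.2 + p.1) k)
        ((volume : Measure V3).prod volume) :=
      (EuclideanSpace.proj k).continuous.comp_aestronglyMeasurable (aux_shift_aesm u hum)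
    exact h1.mul (h2.mul h3)
  have hFint : ∀ k : Fin 3, Integrable (Function.uncurry (f k))
      ((volume : Measure V3).prod volume) := by
    intro k
    rw [integrable_prod_iff (hFm k)]
    constructor
    · exact Filter.Eventually.of_forall fun h => hslicef k h
    · refine Integrable.mono' (g := K'.indicator fun _ => B k * M) ?_ ?_ ?_
      · exact (integrableOn_const hχc.measure_lt_top.ne).integrable_indicator hK'm
      · exact ((hFm k).norm).integral_prod_right'
      · refine Filter.Eventually.of_forall fun h => ?_
        show ‖∫ x : V3, ‖f k h x‖‖ ≤ K'.indicator (fun _ => B k * M) h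
        have hnn : 0 ≤ ∫ x, ‖f k h x‖ := integral_nonneg fun x => norm_nonneg _
        rw [Real.norm_of_nonneg hnn]
        by_cases hh : h ∈ K'
        · rw [Set.indicator_of_mem hh]
          calc ∫ x, ‖f k h x‖
              ≤ ∫ x, B k * K.indicator (fun x => Cψ * (2 * w x + w (x + h))) x := by
                apply integral_mono ((hslicef k h).norm)
                · exact ((((hw.const_mul 2).add (hw.comp_add_right h)).const_mul
                    Cψ).indicator hKm).const_mul (B k)
                · intro x
                  calc ‖f k h x‖ = ‖pd k χ h‖ * ‖a x * u (x + h) k‖ := by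
                        rw [hf_def]; simp [norm_mul]
                    _ ≤ B k * K.indicator (fun x => Cψ * (2 * w x + w (x + h))) x := by
                        apply mul_le_mul (hB k h) (hbound h x k) (norm_nonneg _) (hB0 k)
            _ = B k * ∫ x, K.indicator (fun x => Cψ * (2 * w x + w (x + h))) x :=
                integral_const_mul _ _
            _ ≤ B k * M := mul_le_mul_of_nonneg_left (hwb h) (hB0 k)
        · rw [Set.indicator_of_notMem hh]
          have : ∀ x, f k h x = 0 := by
            intro x
            rw [hf_def]
            simp [hpd0 k h hh]
          simp [this]
  -- rewrite the set integral
  have hset : ∀ (h : V3) (k : Fin 3),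
      (∫ x in D, ψ x * (u x i * u x j * u (x + h) k)) = ∫ x, a x * u (x + h) k := by
    intro h k
    rw [setIntegral_eq_integral_of_forall_compl_eq_zero (fun x hx => by
      have : ψ x = 0 := image_eq_zero_of_notMem_tsupport (fun hmem => hx (hψD hmem))
      simp [this])]
    congr 1
    funext x
    rw [ha_def]
    ring
  -- Fubini for each k
  have hswap : ∀ k : Fin 3,
      (∫ h : V3, pd k χ h * ∫ x in D, ψ x * (u x i * u x j * u (x + h) k))
      = ∫ x : V3, ∫ h : V3, f k h x := by
    intro k
    have e1 : (fun h : V3 => pd k χ h * ∫ x in D, ψ x * (u x i * u x j * u (x + h) k))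
        = fun h : V3 => ∫ x : V3, f k h x := by
      funext h
      rw [hset h k, hf_def]
      exact (integral_const_mul _ _).symm
    rw [e1]
    exact integral_integral_swap (hFint k)
  -- integrability of the inner integrals
  have hinner_int : ∀ k : Fin 3, Integrable (fun x : V3 => ∫ h : V3, f k h x) volume := by
    intro k
    exact (hFint k).integral_prod_right
  -- slice integrability in h, for every x (for the pointwise argument)
  have hslice_h : ∀ (x : V3) (k : Fin 3),
      Integrable (fun h => pd k χ h * u (x + h) k) volume := by
    intro x k
    refine Integrable.mono'
      (g := K'.indicator fun h => B k * (1 + w (x + h))) ?_ ?_ ?_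
    · refine IntegrableOn.integrable_indicator ?_ hK'm
      exact Integrable.const_mul
        ((integrableOn_const hχc.measure_lt_top.ne).add
          ((hw.comp_add_left x).integrableOn)) (B k)
    · exact ((hpdc k).aestronglyMeasurable).mul
        ((EuclideanSpace.proj k).continuous.comp_aestronglyMeasurable
          (hum.comp_quasiMeasurePreserving
            (measurePreserving_add_left (volume : Measure V3) x).quasiMeasurePreserving))
    · refine Filter.Eventually.of_forall fun h => ?_
      by_cases hh : h ∈ K'
      · rw [Set.indicator_of_mem hh]
        calc ‖pd k χ h * u (x + h) k‖ = ‖pd k χ h‖ * |u (x + h) k| := by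
              simp [norm_mul]
          _ ≤ B k * (1 + w (x + h)) := by
              apply mul_le_mul (hB k h) ?_ (abs_nonneg _) (hB0 k)
              refine (aux_coord_abs_le _ k).trans ?_
              have := aux_abs_le_one_add_cube ‖u (x + h)‖
              rw [abs_of_nonneg (norm_nonneg _)] at this
              simpa [hw_def] using this
      · rw [Set.indicator_of_notMem hh]
        simp [hpd0 k h hh]
  -- pointwise vanishing of the summed inner integrals
  have hzero : ∀ x : V3, (∑ k : Fin 3, ∫ h : V3, f k h x) = 0 := by
    intro x
    have e1 : ∀ k : Fin 3, (∫ h : V3, f k h x)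
        = a x * ∫ h : V3, pd k χ h * u (x + h) k := by
      intro k
      rw [show (fun h => f k h x) = fun h => a x * (pd k χ h * u (x + h) k) by
        funext h; rw [hf_def]; ring]
      exact integral_const_mul _ _
    rw [Finset.sum_congr rfl fun k _ => e1 k, ← Finset.mul_sum]
    by_cases hx : a x = 0
    · simp [hx]
    · have hxK : x ∈ K := by
        by_contra hxn; exact hx (ha0 x hxn)
      have hball := aux_ball_subset D ψ hψD κ hκ hκpos x hxK
      have h0 := aux_inner_vanish D u hdiv χ hχ hχc κ hχκ x hball
      rw [← integral_finset_sum Finset.univ (fun k _ => hslice_h x k), h0, mul_zero]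
  -- conclusion
  rw [Finset.sum_congr rfl fun k _ => hswap k,
    ← integral_finset_sum Finset.univ (fun k _ => hinner_int k)]
  calc ∫ x : V3, ∑ k : Fin 3, ∫ h : V3, f k h x
      = ∫ _x : V3, (0:ℝ) := integral_congr_ae (Filter.Eventually.of_forall fun x => hzero x)
    _ = 0 := integral_zero _ _
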